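/- Let X be an order-N real tensor of shape (I_1,…,I_N) and r = (R_1,…,R_N) a core shape with 1 ≤ R_n ≤ I_n. For every core tensor G ∈ ℝ^{R_1×⋯×R_N} and factor matrices A^(n) ∈ ℝ^{I_n×R_n} (n = 1,…,N), the reconstruction X̂ = G ×_1 A^(1) ×_2 ⋯ ×_N A^(N) satisfies ‖X − X̂‖_F² ≥ max_{n∈[N]} Σ_{i=R_n+1}^{I_n} (σ_i^(n))². Consequently L(X,r) ≥ max_{n∈[N]} Σ_{i=R_n+1}^{I_n} (σ_i^(n))². -/

import Mathlib

open scoped BigOperators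
open Matrix

/-- Combine a fixed `n`-th coordinate with coordinates for the remaining modes. -/
def fullIdx {N : ℕ} {I : Fin N → ℕ} (n : Fin N) (i : Fin (I n))
    (j : ∀ m : {m : Fin N // m ≠ n}, Fin (I m.1)) : ∀ k, Fin (I k) :=
  fun k => if h : k = n then Fin.cast (congrArg I h).symm i else j ⟨k, h⟩

/-- Mode-`n` unfolding of a tensor. -/
def modeUnfold {N : ℕ} {I : Fin N → ℕ} (X : (∀ k, Fin (I k)) → ℝ) (n : Fin N) :
    Matrix (Fin (I n)) (∀ m : {m : Fin N // m ≠ n}, Fin (I m.1)) ℝ :=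
  fun i j => X (fullIdx n i j)

/-- Squared Frobenius norm of a tensor. -/
noncomputable def frobSq {N : ℕ} {I : Fin N → ℕ} (X : (∀ k, Fin (I k)) → ℝ) : ℝ :=
  ∑ i : ∀ k, Fin (I k), (X i) ^ 2

/-- Tucker/multilinear reconstruction `G ×₁ A 1 ×₂ ⋯ ×_N A N`. -/
noncomputable def tucker {N : ℕ} {I R : Fin N → ℕ} (G : (∀ k, Fin (R k)) → ℝ)
    (A : ∀ n, Matrix (Fin (I n)) (Fin (R n)) ℝ) : (∀ k, Fin (I k)) → ℝ :=
  fun i => ∑ j : ∀ k, Fin (R k), G j * ∏ n, A n (i n) (j n)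

/-- Optimal rank-`R` Tucker loss `L(X, R)`. -/
noncomputable def tuckerLoss {N : ℕ} (I : Fin N → ℕ) (X : (∀ k, Fin (I k)) → ℝ)
    (R : Fin N → ℕ) : ℝ :=
  sInf {v : ℝ | ∃ (G : (∀ k, Fin (R k)) → ℝ)
    (A : ∀ n, Matrix (Fin (I n)) (Fin (R n)) ℝ),
    v = frobSq (fun i => X i - tucker G A i)}

/-- `σ` lists the singular values of `M` in nonincreasing order:
entries are nonnegative, nonincreasing, and their squares are the eigenvalues
of the positive semidefinite matrix `M * Mᵀ` (up to a permutation). -/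
def IsSingularValues {k : ℕ} {c : Type*} [Fintype c]
    (M : Matrix (Fin k) c ℝ) (σ : Fin k → ℝ) : Prop :=
  (∀ i, 0 ≤ σ i) ∧ Antitone σ ∧
    ∃ e : Equiv.Perm (Fin k), ∀ i, σ i ^ 2 =
      (Matrix.isHermitian_mul_conjTranspose_self M).eigenvalues (e i)

/-- Truncation of a tensor to the leading `R`-block. -/
def truncate {N : ℕ} {I : Fin N → ℕ} (S : (∀ k, Fin (I k)) → ℝ)
    (R : Fin N → ℕ) : (∀ k, Fin (I k)) → ℝ :=
  fun i => if ∀ n, (i n : ℕ) < R n then S i else 0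

/-- Surrogate loss `L̃(X, R)`: sum of the squared tail singular values. -/
noncomputable def surrLoss {N : ℕ} {I : Fin N → ℕ} (σ : ∀ n, Fin (I n) → ℝ)
    (R : Fin N → ℕ) : ℝ :=
  ∑ n, ∑ i ∈ Finset.univ.filter (fun i : Fin (I n) => R n ≤ (i : ℕ)), σ n i ^ 2

/-- Packing objective: sum of the squared leading singular values. -/
noncomputable def packObj {N : ℕ} {I : Fin N → ℕ} (σ : ∀ n, Fin (I n) → ℝ)
    (R : Fin N → ℕ) : ℝ :=
  ∑ n, ∑ i ∈ Finset.univ.filter (fun i : Fin (I n) => (i : ℕ) < R n), σ n i ^ 2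

/-!
Fix a mode `n`. The mode-`n` unfolding of `G ×₁ A⁽¹⁾ ⋯ ×_N A⁽ᴺ⁾` has the form `A⁽ⁿ⁾ B`, so it
suffices to show `‖M - A B‖² ≥ Σ_{i ≥ R} σᵢ²` for a `k × c` matrix `M` with singular values
`σ` and a `k × R` matrix `A`. The left kernel of `A` contains orthonormal vectors
`v₁, …, v_{k-R}`; by Bessel's inequality applied column by column,
`‖M - A B‖² ≥ Σₛ ‖vₛᵀ (M - A B)‖² = Σₛ ‖vₛᵀ M‖² = Σₚ σₚ² tₚ`, where `tₚ = Σₛ ⟪uₚ, vₛ⟫²`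
for an orthonormal eigenbasis `u` of `M Mᵀ`. The weights `tₚ` lie in `[0, 1]` and sum to
`k - R`, and against such weights a nonincreasing sequence has weighted sum at least the sum
of its last `k - R` terms.
-/

theorem Finset.sum_le_sum_mul_of_sum_eq_card {ι : Type*} [Fintype ι] (S : Finset ι)
    (f t : ι → ℝ) (c : ℝ) (hS : ∀ i ∈ S, f i ≤ c) (hSc : ∀ i ∉ S, c ≤ f i)
    (ht0 : ∀ i, 0 ≤ t i) (ht1 : ∀ i, t i ≤ 1) (ht : ∑ i, t i = S.card) :
    ∑ i ∈ S, f i ≤ ∑ i, f i * t i := by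
  classical
  have key : 0 ≤ ∑ i, (f i - c) * (t i - if i ∈ S then 1 else 0) := by
    refine Finset.sum_nonneg fun i _ => ?_
    by_cases hi : i ∈ S
    · simp only [hi, if_true]
      exact mul_nonneg_of_nonpos_of_nonpos (by linarith [hS i hi]) (by linarith [ht1 i])
    · simp only [hi, if_false, sub_zero]
      exact mul_nonneg (by linarith [hSc i hi]) (ht0 i)
  have expand : ∑ i, (f i - c) * (t i - if i ∈ S then 1 else 0) =
      ∑ i, f i * t i - ∑ i ∈ S, f i - c * (∑ i, t i - S.card) := by
    simp only [mul_sub, sub_mul, Finset.sum_sub_distrib, mul_ite, mul_one, mul_zero,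
      Finset.sum_ite_mem, Finset.univ_inter, ← Finset.mul_sum, Finset.sum_const, nsmul_eq_mul]
    ring
  rw [expand, ht] at key
  linarith

theorem Fin.card_filter_le_val (k R : ℕ) :
    (Finset.univ.filter fun i : Fin k => R ≤ (i : ℕ)).card = k - R := by
  have h := Finset.card_filter_add_card_filter_not (s := Finset.univ)
    (fun i : Fin k => (i : ℕ) < R)
  simp only [Fin.card_filter_val_lt, not_lt, Finset.card_univ, Fintype.card_fin] at h
  omega

theorem Antitone.sum_filter_le_val_le_sum_mul {k : ℕ} {f : Fin k → ℝ} (hf : Antitone f)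
    (hf0 : ∀ i, 0 ≤ f i) (R : ℕ) {t : Fin k → ℝ} (ht0 : ∀ i, 0 ≤ t i) (ht1 : ∀ i, t i ≤ 1)
    (ht : ∑ i, t i = (k - R : ℕ)) :
    ∑ i ∈ Finset.univ.filter (fun i : Fin k => R ≤ (i : ℕ)), f i ≤ ∑ i, f i * t i := by
  rw [← Fin.card_filter_le_val k R] at ht
  by_cases hR : R < k
  · refine Finset.sum_le_sum_mul_of_sum_eq_card _ f t (f ⟨R, hR⟩) (fun i hi => hf ?_)
      (fun i hi => hf ?_) ht0 ht1 ht
    · simpa [Fin.le_def] using hi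
    · simp only [Finset.mem_filter, Finset.mem_univ, true_and, not_le] at hi
      exact Fin.le_def.mpr hi.le
  · refine Finset.sum_le_sum_mul_of_sum_eq_card _ f t 0 (fun i hi => ?_) (fun i _ => hf0 i)
      ht0 ht1 ht
    simp only [Finset.mem_filter, Finset.mem_univ, true_and] at hi
    omega

open Module in
theorem LinearMap.exists_orthonormal_ker {𝕜 E F : Type*} [RCLike 𝕜] [NormedAddCommGroup E]
    [InnerProductSpace 𝕜 E] [FiniteDimensional 𝕜 E] [AddCommGroup F] [Module 𝕜 F]
    [FiniteDimensional 𝕜 F] (f : E →ₗ[𝕜] F) :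
    ∃ v : Fin (finrank 𝕜 E - finrank 𝕜 F) → E, Orthonormal 𝕜 v ∧ ∀ s, f (v s) = 0 := by
  have hdim : finrank 𝕜 E - finrank 𝕜 F ≤ finrank 𝕜 (ker f) := by
    have := f.finrank_range_add_finrank_ker
    have := (range f).finrank_le
    omega
  let b := stdOrthonormalBasis 𝕜 (ker f)
  refine ⟨fun s => b (Fin.castLE hdim s), ?_, fun s => (b (Fin.castLE hdim s)).2⟩
  exact (b.orthonormal.comp_linearIsometry (ker f).subtypeₗᵢ).comp _ (Fin.castLE_injective hdim)

theorem Matrix.IsHermitian.dotProduct_mulVec_self_eq_sum {k : Type*} [Fintype k]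
    [DecidableEq k] {H : Matrix k k ℝ} (hH : H.IsHermitian) (w : EuclideanSpace ℝ k) :
    w ⬝ᵥ H *ᵥ w = ∑ p, hH.eigenvalues p * inner ℝ (hH.eigenvectorBasis p) w ^ 2 := by
  set u := hH.eigenvectorBasis
  have hsymm := Matrix.isSymmetric_toEuclideanLin_iff.mpr hH
  have hev (p : k) : Matrix.toEuclideanLin H (u p) = hH.eigenvalues p • u p := by
    ext i
    simpa using congrFun (hH.mulVec_eigenvectorBasis p) i
  calc w ⬝ᵥ H *ᵥ w = inner ℝ w (Matrix.toEuclideanLin H w) := by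
        simp [EuclideanSpace.inner_eq_star_dotProduct, dotProduct_comm]
    _ = ∑ p, inner ℝ w (u p) * inner ℝ (Matrix.toEuclideanLin H (u p)) w := by
        rw [← u.sum_inner_mul_inner]
        exact Finset.sum_congr rfl fun p _ => by rw [hsymm]
    _ = _ := by
        refine Finset.sum_congr rfl fun p _ => ?_
        rw [hev p, real_inner_smul_left, real_inner_comm w]
        ring

theorem Matrix.sum_vecMul_sq_eq_sum_eigenvalues {m n : Type*} [Fintype m] [DecidableEq m]
    [Fintype n] (M : Matrix m n ℝ) (w : EuclideanSpace ℝ m) :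
    ∑ j, (w.ofLp ᵥ* M) j ^ 2 = ∑ p, (isHermitian_mul_conjTranspose_self M).eigenvalues p *
      inner ℝ ((isHermitian_mul_conjTranspose_self M).eigenvectorBasis p) w ^ 2 := by
  rw [← IsHermitian.dotProduct_mulVec_self_eq_sum, conjTranspose_eq_transpose_of_trivial,
    ← mulVec_mulVec, dotProduct_mulVec, mulVec_transpose]
  simp only [dotProduct, sq]

theorem Orthonormal.sum_sum_vecMul_sq_le {ι m n : Type*} [Fintype ι] [Fintype m] [Fintype n]
    {v : ι → EuclideanSpace ℝ m} (hv : Orthonormal ℝ v) (N : Matrix m n ℝ) :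
    ∑ s, ∑ j, ((v s).ofLp ᵥ* N) j ^ 2 ≤ ∑ i, ∑ j, N i j ^ 2 := by
  rw [Finset.sum_comm, Finset.sum_comm (γ := m)]
  refine Finset.sum_le_sum fun j _ => ?_
  have hcol := hv.sum_inner_products_le (s := Finset.univ) (WithLp.toLp 2 fun i => N i j)
  simpa [EuclideanSpace.norm_sq_eq, Matrix.vecMul, dotProduct, PiLp.inner_apply, mul_comm]
    using hcol

theorem IsSingularValues.sum_filter_sq_le_sum_sq_sub_mul {k R : ℕ} {c : Type*} [Fintype c]
    {M : Matrix (Fin k) c ℝ} {σ : Fin k → ℝ} (hσ : IsSingularValues M σ)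
    (A : Matrix (Fin k) (Fin R) ℝ) (B : Matrix (Fin R) c ℝ) :
    ∑ i ∈ Finset.univ.filter (fun i : Fin k => R ≤ (i : ℕ)), σ i ^ 2 ≤
      ∑ i, ∑ j, (M - A * B) i j ^ 2 := by
  obtain ⟨hσ0, hσanti, e, he⟩ := hσ
  have hker := LinearMap.exists_orthonormal_ker
    (A.vecMulLinear ∘ₗ (WithLp.linearEquiv 2 ℝ (Fin k → ℝ)).toLinearMap)
  rw [finrank_euclideanSpace_fin, Module.finrank_fin_fun] at hker
  obtain ⟨v, hv, hvA⟩ := hker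
  set hH := Matrix.isHermitian_mul_conjTranspose_self M
  set u := hH.eigenvectorBasis
  set t : Fin k → ℝ := fun p => ∑ s, inner ℝ (u p) (v s) ^ 2
  have ht0 (p : Fin k) : 0 ≤ t p := Finset.sum_nonneg fun s _ => sq_nonneg _
  have ht1 (p : Fin k) : t p ≤ 1 := by
    have := hv.sum_inner_products_le (s := Finset.univ) (u p)
    simpa [t, u.orthonormal.1 p, real_inner_comm] using this
  have ht : ∑ p, t (e p) = (k - R : ℕ) := by
    rw [Equiv.sum_comp e t, Finset.sum_comm]
    simp [u.sum_sq_inner_right, hv.1]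
  have hvB (s) : (v s).ofLp ᵥ* (M - A * B) = (v s).ofLp ᵥ* M := by
    have hvsA : (v s).ofLp ᵥ* A = 0 := hvA s
    rw [Matrix.vecMul_sub, ← Matrix.vecMul_vecMul, hvsA, Matrix.zero_vecMul, sub_zero]
  calc ∑ i ∈ Finset.univ.filter (fun i : Fin k => R ≤ (i : ℕ)), σ i ^ 2
      ≤ ∑ p, σ p ^ 2 * t (e p) :=
        Antitone.sum_filter_le_val_le_sum_mul
          (fun i j hij => pow_le_pow_left₀ (hσ0 j) (hσanti hij) 2) (fun i => sq_nonneg _) R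
          (fun _ => ht0 _) (fun _ => ht1 _) ht
    _ = ∑ p, hH.eigenvalues p * t p := by
        rw [← Equiv.sum_comp e (fun p => hH.eigenvalues p * t p)]
        simp only [he]
    _ = ∑ s, ∑ p, hH.eigenvalues p * inner ℝ (u p) (v s) ^ 2 := by
        simp only [t, Finset.mul_sum]
        exact Finset.sum_comm
    _ = ∑ s, ∑ j, ((v s).ofLp ᵥ* M) j ^ 2 := by
        simp only [M.sum_vecMul_sq_eq_sum_eigenvalues, u]
    _ = ∑ s, ∑ j, ((v s).ofLp ᵥ* (M - A * B)) j ^ 2 := by simp only [hvB]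
    _ ≤ ∑ i, ∑ j, (M - A * B) i j ^ 2 := hv.sum_sum_vecMul_sq_le _

section Unfolding

variable {N : ℕ} {I : Fin N → ℕ}

theorem fullIdx_eq_piSplitAt_symm (n : Fin N) (i : Fin (I n))
    (j : ∀ m : {m : Fin N // m ≠ n}, Fin (I m.1)) :
    fullIdx n i j = (Equiv.piSplitAt n fun k => Fin (I k)).symm (i, j) := by
  funext k
  by_cases h : k = n
  · subst h
    simp [fullIdx, Equiv.piSplitAt]
  · simp [fullIdx, Equiv.piSplitAt, h]

theorem fullIdx_self (n : Fin N) (i : Fin (I n))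
    (j : ∀ m : {m : Fin N // m ≠ n}, Fin (I m.1)) : fullIdx n i j n = i := by
  simp [fullIdx_eq_piSplitAt_symm, Equiv.piSplitAt]

theorem fullIdx_of_ne (n : Fin N) (i : Fin (I n))
    (j : ∀ m : {m : Fin N // m ≠ n}, Fin (I m.1)) {m : Fin N} (h : m ≠ n) :
    fullIdx n i j m = j ⟨m, h⟩ := by
  simp [fullIdx, h]

theorem frobSq_eq_sum_modeUnfold (T : (∀ k, Fin (I k)) → ℝ) (n : Fin N) :
    frobSq T = ∑ i, ∑ j, modeUnfold T n i j ^ 2 := by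
  rw [frobSq, ← (Equiv.piSplitAt n fun k => Fin (I k)).symm.sum_comp, Fintype.sum_prod_type]
  simp only [modeUnfold, fullIdx_eq_piSplitAt_symm]

theorem exists_modeUnfold_tucker_eq_mul {R : Fin N → ℕ} (G : (∀ k, Fin (R k)) → ℝ)
    (A : ∀ n, Matrix (Fin (I n)) (Fin (R n)) ℝ) (n : Fin N) :
    ∃ B : Matrix (Fin (R n)) (∀ m : {m : Fin N // m ≠ n}, Fin (I m.1)) ℝ,
      modeUnfold (tucker G A) n = A n * B := by
  refine ⟨Matrix.of fun c j => ∑ g : ∀ m : {m : Fin N // m ≠ n}, Fin (R m.1),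
    G (fullIdx n c g) * ∏ m : {m : Fin N // m ≠ n}, A m.1 (j m) (g m), ?_⟩
  funext i j
  change tucker G A (fullIdx n i j) = _
  rw [tucker, Matrix.mul_apply, ← (Equiv.piSplitAt n fun k => Fin (R k)).symm.sum_comp,
    Fintype.sum_prod_type]
  refine Finset.sum_congr rfl fun c _ => ?_
  rw [Matrix.of_apply, Finset.mul_sum]
  refine Finset.sum_congr rfl fun g _ => ?_
  rw [← fullIdx_eq_piSplitAt_symm, Fintype.prod_eq_mul_prod_subtype_ne _ n, fullIdx_self,
    fullIdx_self]
  have hrest : ∏ m : {m : Fin N // m ≠ n}, A m.1 (fullIdx n i j m.1) (fullIdx n c g m.1) =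
      ∏ m : {m : Fin N // m ≠ n}, A m.1 (j m) (g m) :=
    Finset.prod_congr rfl fun m _ => by rw [fullIdx_of_ne n i j m.2, fullIdx_of_ne n c g m.2]
  rw [hrest]
  ring

end Unfolding

theorem tucker_loss_lower_bound_general {N : ℕ} {I : Fin N → ℕ}
    (X : (∀ k, Fin (I k)) → ℝ)
    (σ : ∀ n, Fin (I n) → ℝ) (hσ : ∀ n, IsSingularValues (modeUnfold X n) (σ n))
    (R : Fin N → ℕ) :
    (∀ (G : (∀ k, Fin (R k)) → ℝ) (A : ∀ n, Matrix (Fin (I n)) (Fin (R n)) ℝ)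
      (n : Fin N),
      ∑ i ∈ Finset.univ.filter (fun i : Fin (I n) => R n ≤ (i : ℕ)), σ n i ^ 2 ≤
        frobSq (fun i => X i - tucker G A i)) ∧
    ∀ n : Fin N,
      ∑ i ∈ Finset.univ.filter (fun i : Fin (I n) => R n ≤ (i : ℕ)), σ n i ^ 2 ≤
        tuckerLoss I X R := by
  have hbound (G : (∀ k, Fin (R k)) → ℝ) (A : ∀ n, Matrix (Fin (I n)) (Fin (R n)) ℝ)
      (n : Fin N) :
      ∑ i ∈ Finset.univ.filter (fun i : Fin (I n) => R n ≤ (i : ℕ)), σ n i ^ 2 ≤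
        frobSq (fun i => X i - tucker G A i) := by
    obtain ⟨B, hB⟩ := exists_modeUnfold_tucker_eq_mul G A n
    rw [frobSq_eq_sum_modeUnfold _ n]
    have hmatrix := (hσ n).sum_filter_sq_le_sum_sq_sub_mul (A n) B
    rwa [← hB] at hmatrix
  refine ⟨hbound, fun n => le_csInf ⟨_, 0, 0, rfl⟩ ?_⟩
  rintro v ⟨G, A, rfl⟩
  exact hbound G A n

/-- **Lower bound for the reconstruction error**: any Tucker reconstruction with core
shape `R` incurs squared error at least `max_n Σ_{i > R_n} (σ_i⁽ⁿ⁾)²` (stated as the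
bound holding for every mode `n`), and consequently so does the optimal loss `L(X,R)`. -/
theorem tucker_loss_lower_bound {N : ℕ} {I : Fin N → ℕ} (hI : ∀ n, 1 ≤ I n)
    (X : (∀ k, Fin (I k)) → ℝ)
    (σ : ∀ n, Fin (I n) → ℝ) (hσ : ∀ n, IsSingularValues (modeUnfold X n) (σ n))
    (R : Fin N → ℕ) (hR : ∀ n, 1 ≤ R n ∧ R n ≤ I n) :
    (∀ (G : (∀ k, Fin (R k)) → ℝ) (A : ∀ n, Matrix (Fin (I n)) (Fin (R n)) ℝ)
      (n : Fin N),
      ∑ i ∈ Finset.univ.filter (fun i : Fin (I n) => R n ≤ (i : ℕ)), σ n i ^ 2 ≤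
        frobSq (fun i => X i - tucker G A i)) ∧
    ∀ n : Fin N,
      ∑ i ∈ Finset.univ.filter (fun i : Fin (I n) => R n ≤ (i : ℕ)), σ n i ^ 2 ≤
        tuckerLoss I X R :=
  tucker_loss_lower_bound_general X σ hσ R
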